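/- arXiv:2603.08660 — 2 statements merged into one kernel-verified Lean document; each statement's English description precedes it below -/
import Mathlib

section
/- Let α > 1, η_min ∈ (0,1], and let (ε_k) be a sequence in (0,1) satisfying ε_{k+1} = ε_k·(1 − η_k·((α−1)(1−ε_k))/(α − (α−1)ε_k)) with η_k ∈ [η_min, 1]. Then (ε_k) is strictly decreasing and converges to 0. -/
theorem stmt_5 (α : ℝ) (hα : 1 < α) (ηmin : ℝ) (hηmin : ηmin ∈ Set.Ioc (0:ℝ) 1)
    (ε : ℕ → ℝ) (η : ℕ → ℝ)
    (hε : ∀ k, ε k ∈ Set.Ioo (0:ℝ) 1)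
    (hη : ∀ k, η k ∈ Set.Icc ηmin 1)
    (hrec : ∀ k, ε (k+1) =
      ε k * (1 - η k * ((α - 1) * (1 - ε k)) / (α - (α - 1) * ε k))) :
    StrictAnti ε ∧ Filter.Tendsto ε Filter.atTop (nhds 0) := by
  have hα1 : (0:ℝ) < α - 1 := by linarith
  have hηminpos : 0 < ηmin := hηmin.1
  have hden : ∀ k, 0 < α - (α - 1) * ε k := by
    intro k
    have h := hε k
    nlinarith [h.1, h.2]
  have hnum : ∀ k, 0 < η k * ((α - 1) * (1 - ε k)) := by
    intro k
    have h := hε k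
    have h2 := hη k
    have hηk : 0 < η k := lt_of_lt_of_le hηminpos h2.1
    exact mul_pos hηk (mul_pos hα1 (by linarith [h.2]))
  have hfac_lt : ∀ k, (1 - η k * ((α - 1) * (1 - ε k)) / (α - (α - 1) * ε k)) < 1 := by
    intro k
    have := div_pos (hnum k) (hden k)
    linarith
  have hsa : StrictAnti ε := by
    apply strictAnti_nat_of_succ_lt
    intro k
    rw [hrec k]
    calc ε k * (1 - η k * ((α - 1) * (1 - ε k)) / (α - (α - 1) * ε k))
        < ε k * 1 := mul_lt_mul_of_pos_left (hfac_lt k) (hε k).1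
      _ = ε k := mul_one _
  refine ⟨hsa, ?_⟩
  set c : ℝ := ηmin * (α - 1) * (1 - ε 0) / α with hc
  have hαpos : (0:ℝ) < α := by linarith
  have hε0 := hε 0
  have hc0 : 0 < c := by
    apply div_pos _ hαpos
    exact mul_pos (mul_pos hηminpos hα1) (by linarith [hε0.2])
  have hc1 : c < 1 := by
    rw [hc, div_lt_one hαpos]
    have h1 : ηmin * (α - 1) ≤ α - 1 := mul_le_of_le_one_left hα1.le hηmin.2
    have h2 : ηmin * (α - 1) * (1 - ε 0) ≤ ηmin * (α - 1) :=
      mul_le_of_le_one_right (mul_pos hηminpos hα1).le (by linarith [hε0.1])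
    linarith
  have hle0 : ∀ k, ε k ≤ ε 0 := fun k => hsa.antitone (Nat.zero_le k)
  have hstep : ∀ k, ε (k + 1) ≤ ε k * (1 - c) := by
    intro k
    rw [hrec k]
    apply mul_le_mul_of_nonneg_left _ (hε k).1.le
    have hratio : c ≤ η k * ((α - 1) * (1 - ε k)) / (α - (α - 1) * ε k) := by
      rw [hc, div_le_div_iff₀ hαpos (hden k)]
      have h := hε k
      have h2 := hη k
      have hAB : ηmin * (α - 1) * (1 - ε 0) ≤ η k * ((α - 1) * (1 - ε k)) := by
        nlinarith [mul_nonneg (mul_nonneg (sub_nonneg.2 h2.1) hα1.le)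
            (by linarith [hε0.2] : (0:ℝ) ≤ 1 - ε 0),
          mul_nonneg (mul_nonneg (le_trans hηminpos.le h2.1) hα1.le)
            (by linarith [hle0 k] : (0:ℝ) ≤ ε 0 - ε k)]
      have hA0 : 0 ≤ ηmin * (α - 1) * (1 - ε 0) :=
        (mul_pos (mul_pos hηminpos hα1) (by linarith [hε0.2])).le
      have hDα : α - (α - 1) * ε k ≤ α := by nlinarith [h.1]
      calc ηmin * (α - 1) * (1 - ε 0) * (α - (α - 1) * ε k)
          ≤ ηmin * (α - 1) * (1 - ε 0) * α := mul_le_mul_of_nonneg_left hDα hA0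
        _ ≤ η k * ((α - 1) * (1 - ε k)) * α := mul_le_mul_of_nonneg_right hAB hαpos.le
    linarith
  have hbound : ∀ k, ε k ≤ ε 0 * (1 - c) ^ k := by
    intro k
    induction k with
    | zero => simp
    | succ n ih =>
      calc ε (n + 1) ≤ ε n * (1 - c) := hstep n
        _ ≤ (ε 0 * (1 - c) ^ n) * (1 - c) :=
            mul_le_mul_of_nonneg_right ih (by linarith)
        _ = ε 0 * (1 - c) ^ (n + 1) := by ring
  have hgeo : Filter.Tendsto (fun k => ε 0 * (1 - c) ^ k) Filter.atTop (nhds 0) := by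
    have := tendsto_pow_atTop_nhds_zero_of_lt_one (by linarith : (0:ℝ) ≤ 1 - c)
      (by linarith : (1:ℝ) - c < 1)
    simpa using this.const_mul (ε 0)
  exact tendsto_of_tendsto_of_tendsto_of_le_of_le tendsto_const_nhds hgeo
    (fun k => (hε k).1.le) hbound
end

section
/- Let π_0 be a probability distribution on a finite set Y with π_0(y) > 0 for all y, β > 0, and define iteratively π_{k+1}(y) = π_k(y)^(1+1/β)/Z_k with Z_k = ∑_{y'} π_k(y')^(1+1/β). If there is a unique y* with π_0(y*) > π_0(y) for all y ≠ y*, then π_k(y*) → 1 and π_k(y) → 0 for y ≠ y* as k → ∞. -/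
open Filter

theorem stmt_16 {Y : Type*} [Fintype Y] (β : ℝ) (hβ : 0 < β)
    (π : ℕ → Y → ℝ) (hpos0 : ∀ y, 0 < π 0 y) (hsum0 : ∑ y, π 0 y = 1)
    (hrec : ∀ k y, π (k+1) y = π k y ^ (1 + 1/β) / ∑ y', π k y' ^ (1 + 1/β))
    (ystar : Y) (hmax : ∀ y, y ≠ ystar → π 0 y < π 0 ystar) :
    Filter.Tendsto (fun k => π k ystar) Filter.atTop (nhds 1) ∧
    ∀ y, y ≠ ystar → Filter.Tendsto (fun k => π k y) Filter.atTop (nhds 0) := by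
  classical
  have hne : Nonempty Y := ⟨ystar⟩
  set c : ℝ := 1 + 1/β with hc
  have hc1 : (1:ℝ) < c := by
    have : 0 < 1/β := by positivity
    simp only [hc]; linarith
  set b : Y → ℝ := fun y => π 0 y / π 0 ystar with hbdef
  have hb0 : ∀ y, 0 < b y := fun y => div_pos (hpos0 y) (hpos0 ystar)
  have hbstar : b ystar = 1 := div_self (hpos0 ystar).ne'
  have hblt : ∀ y, y ≠ ystar → b y < 1 := fun y hy => (div_lt_one (hpos0 ystar)).2 (hmax y hy)
  have hSpos : ∀ k, 0 < ∑ y', b y' ^ (c^k : ℝ) := fun k =>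
    Finset.sum_pos (fun y' _ => Real.rpow_pos_of_pos (hb0 y') _) Finset.univ_nonempty
  have key : ∀ k y, π k y = b y ^ (c^k : ℝ) / ∑ y', b y' ^ (c^k : ℝ) := by
    intro k
    induction k with
    | zero =>
      intro y
      simp only [pow_zero, Real.rpow_one, hbdef]
      rw [← Finset.sum_div, hsum0]
      rw [div_div_div_cancel_right₀ (hpos0 ystar).ne']
      simp
    | succ k ih =>
      intro y
      have hS := hSpos k
      have hstep : ∀ y, π k y ^ c = b y ^ (c^(k+1) : ℝ) / (∑ y', b y' ^ (c^k:ℝ)) ^ c := by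
        intro y
        rw [ih y, Real.div_rpow (Real.rpow_nonneg (hb0 y).le _) hS.le,
          ← Real.rpow_mul (hb0 y).le, ← pow_succ]
      have hsum : (∑ y', π k y' ^ c) = (∑ y', b y' ^ (c^(k+1):ℝ)) / (∑ y', b y' ^ (c^k:ℝ)) ^ c := by
        rw [Finset.sum_div]
        exact Finset.sum_congr rfl (fun y' _ => hstep y')
      rw [hrec k y, hstep y, hsum]
      rw [div_div_div_cancel_right₀ (Real.rpow_pos_of_pos hS c).ne']
  have hck : Tendsto (fun k => (c^k : ℝ)) atTop atTop :=
    tendsto_pow_atTop_atTop_of_one_lt hc1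
  have hterm : ∀ y, Tendsto (fun k => b y ^ (c^k : ℝ)) atTop
      (nhds (if y = ystar then 1 else 0)) := by
    intro y
    by_cases hy : y = ystar
    · simp [hy, hbstar]
    · simp only [if_neg hy]
      exact (tendsto_rpow_atTop_of_base_lt_one (b y)
        (by linarith [hb0 y]) (hblt y hy)).comp hck
  have hsumlim : Tendsto (fun k => ∑ y', b y' ^ (c^k : ℝ)) atTop (nhds 1) := by
    have := tendsto_finset_sum Finset.univ (fun (y : Y) (_ : y ∈ Finset.univ) => hterm y)
    simpa [Finset.sum_ite_eq'] using this
  have hdiv : ∀ y, Tendsto (fun k => b y ^ (c^k:ℝ) / ∑ y', b y' ^ (c^k:ℝ)) atTop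
      (nhds ((if y = ystar then 1 else 0)/1)) := fun y => (hterm y).div hsumlim one_ne_zero
  constructor
  · have h := hdiv ystar
    simp only [if_pos rfl, div_one] at h
    exact h.congr (fun k => (key k ystar).symm)
  · intro y hy
    have h := hdiv y
    simp only [if_neg hy, zero_div] at h
    exact h.congr (fun k => (key k y).symm)
end
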